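/- There exists a perfect strategy for the ALC task in Spekkens' toy-bit theory: with the shared state ψ₀ = {(a,a)}, local encodings by the Klein four-group permutations U_k, and the verifier's two-outcome measurement {S₁ = ψ₀, S₂ = {1,2,3,4}² \ ψ₀}, the outcome S₁ occurs (i.e. the encoded state is contained in S₁) if and only if Alice's and Bob's strings are equal. -/
import Mathlib


/-- The four allowed Spekkens toy-bit transformations, as permutations of the
four ontic states (here labelled `0,1,2,3` instead of `1,2,3,4`):
`U₀ = id`, `U₁ = (12)(34)`, `U₂ = (13)(24)`, `U₃ = (14)(23)`. -/
def toyU : Fin 4 → Equiv.Perm (Fin 4)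
  | 0 => 1
  | 1 => Equiv.swap 0 1 * Equiv.swap 2 3
  | 2 => Equiv.swap 0 2 * Equiv.swap 1 3
  | 3 => Equiv.swap 0 3 * Equiv.swap 1 2

/-- The shared toy-bit state `ψ₀ = {(a, a)}`. -/
def toyPsi0 : Set (Fin 4 × Fin 4) := {p | p.2 = p.1}

def toyF : (Bool × Bool) ≃ Fin 4 where
  toFun p := match p with
    | (false, false) => 0 | (false, true) => 1 | (true, false) => 2 | (true, true) => 3
  invFun k := match k with
    | 0 => (false, false) | 1 => (false, true) | 2 => (true, false) | 3 => (true, true)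
  left_inv := by decide
  right_inv := by decide

lemma toy_sub_iff (σ τ : Equiv.Perm (Fin 4)) :
    Prod.map σ τ '' toyPsi0 ⊆ toyPsi0 ↔ ∀ a, τ a = σ a := by
  constructor
  · intro h a
    exact h ⟨(a, a), rfl, rfl⟩
  · rintro h _ ⟨⟨b, c⟩, hbc, rfl⟩
    simp only [toyPsi0, Set.mem_setOf_eq] at hbc ⊢
    rw [hbc]; exact h b

lemma toy_disj_of (σ τ : Equiv.Perm (Fin 4)) (h : ∀ a, τ a ≠ σ a) :
    Disjoint (Prod.map σ τ '' toyPsi0) toyPsi0 := by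
  rw [Set.disjoint_left]
  rintro _ ⟨⟨b, c⟩, hbc, rfl⟩ hmem
  simp only [toyPsi0, Set.mem_setOf_eq] at hbc hmem
  simp only [Prod.map_apply] at hmem; rw [hbc] at hmem; exact h b hmem

/-- a perfect ALC strategy in Spekkens' toy-bit theory.  For some
bijection from two-bit strings to `{0,1,2,3}`, encoding by the Klein-group
permutations `U_k` on the shared state `ψ₀` and measuring `{S₁ = ψ₀, S₂ = ψ₀ᶜ}`
is perfect: the encoded state is contained in `S₁ = ψ₀` iff the strings are
equal, and is disjoint from `ψ₀` (i.e. contained in `S₂`) iff they differ. -/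
theorem alc_perfect_toy_bit_strategy :
    ∃ f : (Bool × Bool) ≃ Fin 4, ∀ x y : Bool × Bool,
      (Prod.map (toyU (f x)) (toyU (f y)) '' toyPsi0 ⊆ toyPsi0 ↔ x = y) ∧
      (x ≠ y → Disjoint (Prod.map (toyU (f x)) (toyU (f y)) '' toyPsi0) toyPsi0) := by
  refine ⟨toyF, fun x y => ⟨?_, fun hne => ?_⟩⟩
  · rw [toy_sub_iff]
    revert x y; decide
  · apply toy_disj_of
    revert hne; revert x y; decide
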